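/- Buchberger's criterion over a field: let k be a field, σ a finite type, m a monomial order on σ →₀ ℕ, and G a finite set of nonzero polynomials in MvPolynomial σ k. Suppose that for every pair g₁, g₂ ∈ G, setting t = m.degree g₁ ⊔ m.degree g₂ (the pointwise supremum), the S-polynomial S(g₁,g₂) = (m.leadCoeff g₂) • X^(t − m.degree g₁) * g₁ − (m.leadCoeff g₁) • X^(t − m.degree g₂) * g₂ admits a representation S(g₁,g₂) = Σ_{g ∈ G} q_g * g in which every nonzero summand q_g * g satisfies m.toSyn (m.degree (q_g * g)) < m.toSyn t. Then G is a Gröbner basis of the ideal Ideal.span G: the ideal generated by {monomial (m.degree g) (m.leadCoeff g) | g ∈ G} equals the ideal generated by {monomial (m.degree p) (m.leadCoeff p) | p ∈ Ideal.span G, p ≠ 0}. -/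

import Mathlib

/-!
Write `p ∈ Ideal.span G` as `∑ g ∈ G, q g * g` with the largest degree `δ` of a summand
minimal. If `m.degree p ≺ δ`, the leading terms of the summands of degree `δ` cancel, so their
sum is a combination of S-polynomials of monomial multiples of elements of `G`
(`MonomialOrder.sPolynomial_decomposition'`), that is, of monomial multiples of S-polynomials of
elements of `G`. By hypothesis these have representations with all summands below the lcm of the
head terms, hence below `δ`, contradicting minimality. So `m.degree p = δ`, and the head term of
`p` is the sum of the head terms of the summands of degree `δ`, each a multiple of the head term
of an element of `G`.
-/

open MvPolynomial

/-- Head term of a polynomial with respect to a monomial order. -/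
noncomputable def MonomialOrder.degree' {σ R : Type*} [CommSemiring R] (m : MonomialOrder σ)
    (p : MvPolynomial σ R) : σ →₀ ℕ :=
  m.toSyn.symm (p.support.sup fun s => m.toSyn s)

/-- Head coefficient of a polynomial with respect to a monomial order. -/
noncomputable def MonomialOrder.leadCoeff {σ R : Type*} [CommSemiring R] (m : MonomialOrder σ)
    (p : MvPolynomial σ R) : R :=
  p.coeff (m.degree' p)

namespace MonomialOrder

theorem degree'_eq_degree {σ R : Type*} [CommSemiring R] (m : MonomialOrder σ)
    (p : MvPolynomial σ R) : m.degree' p = m.degree p :=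
  rfl

theorem leadCoeff_eq_leadingCoeff {σ R : Type*} [CommSemiring R] (m : MonomialOrder σ)
    (p : MvPolynomial σ R) : m.leadCoeff p = m.leadingCoeff p :=
  rfl

section Semiring

variable {σ R : Type*} [CommSemiring R] (m : MonomialOrder σ) (G : Finset (MvPolynomial σ R))

def repLE (δ : m.syn) : Submodule R (MvPolynomial σ R) where
  carrier := {p | ∃ q : MvPolynomial σ R → MvPolynomial σ R,
    p = ∑ g ∈ G, q g * g ∧ ∀ g ∈ G, m.toSyn (m.degree (q g * g)) ≤ δ}
  zero_mem' := ⟨0, by simp, fun _ _ => by simp [zero_le]⟩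
  add_mem' := by
    rintro _ _ ⟨q, rfl, hq⟩ ⟨q', rfl, hq'⟩
    refine ⟨q + q', by simp only [Pi.add_apply, add_mul, Finset.sum_add_distrib],
      fun g hg => ?_⟩
    rw [Pi.add_apply, add_mul]
    exact degree_add_le.trans (sup_le (hq g hg) (hq' g hg))
  smul_mem' := by
    rintro c _ ⟨q, rfl, hq⟩
    refine ⟨c • q, by simp only [Finset.smul_sum, Pi.smul_apply, smul_mul_assoc],
      fun g hg => ?_⟩
    rw [Pi.smul_apply, smul_mul_assoc]
    exact degree_smul_le.trans (hq g hg)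

def repLT (δ : m.syn) : Submodule R (MvPolynomial σ R) where
  carrier := {p | ∃ q : MvPolynomial σ R → MvPolynomial σ R,
    p = ∑ g ∈ G, q g * g ∧ ∀ g ∈ G, q g * g ≠ 0 → m.toSyn (m.degree (q g * g)) < δ}
  zero_mem' := ⟨0, by simp, fun _ _ h => by simp at h⟩
  add_mem' := by
    rintro _ _ ⟨q, rfl, hq⟩ ⟨q', rfl, hq'⟩
    refine ⟨q + q', by simp only [Pi.add_apply, add_mul, Finset.sum_add_distrib],
      fun g hg h => ?_⟩
    rw [Pi.add_apply, add_mul] at h ⊢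
    by_cases h₁ : q g * g = 0
    · rw [h₁, zero_add] at h ⊢
      exact hq' g hg h
    by_cases h₂ : q' g * g = 0
    · rw [h₂, add_zero] at h ⊢
      exact hq g hg h
    exact degree_add_le.trans_lt (sup_lt_iff.2 ⟨hq g hg h₁, hq' g hg h₂⟩)
  smul_mem' := by
    rintro c _ ⟨q, rfl, hq⟩
    refine ⟨c • q, by simp only [Finset.smul_sum, Pi.smul_apply, smul_mul_assoc],
      fun g hg h => ?_⟩
    rw [Pi.smul_apply, smul_mul_assoc] at h ⊢
    exact degree_smul_le.trans_lt (hq g hg fun h₀ => h (by rw [h₀, smul_zero]))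

variable {m G}

theorem repLE_mono {δ δ' : m.syn} (h : δ ≤ δ') : m.repLE G δ ≤ m.repLE G δ' :=
  fun _ ⟨q, hp, hq⟩ => ⟨q, hp, fun g hg => (hq g hg).trans h⟩

theorem exists_lt_mem_repLE_of_mem_repLT {δ : m.syn} (hδ : 0 < δ) {p : MvPolynomial σ R}
    (hp : p ∈ m.repLT G δ) : ∃ δ' < δ, p ∈ m.repLE G δ' := by
  obtain ⟨q, rfl, hq⟩ := hp
  refine ⟨G.sup fun g => m.toSyn (m.degree (q g * g)), (Finset.sup_lt_iff hδ).2 fun g hg => ?_,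
    q, rfl, fun g hg => Finset.le_sup (f := fun g => m.toSyn (m.degree (q g * g))) hg⟩
  by_cases h : q g * g = 0
  · rwa [h, degree_zero, map_zero]
  · exact hq g hg h

theorem degree_lt_of_mem_repLT {δ : m.syn} (hδ : 0 < δ) {p : MvPolynomial σ R}
    (hp : p ∈ m.repLT G δ) : m.toSyn (m.degree p) < δ := by
  obtain ⟨δ', hδ', q, rfl, hq⟩ := exists_lt_mem_repLE_of_mem_repLT hδ hp
  exact degree_sum_le.trans_lt (lt_of_le_of_lt (Finset.sup_le hq) hδ')

theorem monomial_mul_mem_repLT {δ : m.syn} {p : MvPolynomial σ R} (hp : p ∈ m.repLT G δ)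
    (e : σ →₀ ℕ) (c : R) : monomial e c * p ∈ m.repLT G (m.toSyn e + δ) := by
  obtain ⟨q, rfl, hq⟩ := hp
  refine ⟨fun g => monomial e c * q g, by simp only [Finset.mul_sum, mul_assoc],
    fun g hg h => ?_⟩
  rw [mul_assoc] at h ⊢
  calc m.toSyn (m.degree (monomial e c * (q g * g)))
      ≤ m.toSyn (m.degree (monomial e c : MvPolynomial σ R)) + m.toSyn (m.degree (q g * g)) :=
        toSyn_degree_mul_le
    _ < m.toSyn e + δ :=
        add_lt_add_of_le_of_lt (degree_monomial_le c) (hq g hg (right_ne_zero_of_mul h))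

theorem leadingTerm_mem_span_of_mem_repLE [NoZeroDivisors R] {p : MvPolynomial σ R}
    (hp : p ∈ m.repLE G (m.toSyn (m.degree p))) :
    m.leadingTerm p ∈ Ideal.span (m.leadingTerm '' G) := by
  obtain ⟨q, hpq, hq⟩ := hp
  have hcoeff : p.coeff (m.degree p) = ∑ g ∈ G, (q g * g).coeff (m.degree p) := by
    rw [← coeff_sum, ← hpq]
  rw [leadingTerm, leadingCoeff, hcoeff, map_sum]
  refine Ideal.sum_mem _ fun g hg => ?_
  by_cases h : (q g * g).coeff (m.degree p) = 0
  · rw [h, map_zero]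
    exact Ideal.zero_mem _
  have hdeg : m.degree (q g * g) = m.degree p :=
    m.toSyn.injective ((hq g hg).antisymm (le_degree (mem_support_iff.2 h)))
  rw [← hdeg, ← leadingCoeff, ← leadingTerm, leadingTerm_mul]
  exact Ideal.mul_mem_left _ _ (Ideal.subset_span (Set.mem_image_of_mem _ hg))

end Semiring

section Ring

variable {σ R : Type*} [CommRing R] {m : MonomialOrder σ} {G : Finset (MvPolynomial σ R)}

theorem degree_sub_leadingTerm_mul_lt [NoZeroDivisors R] {f g : MvPolynomial σ R}
    (h : (f - m.leadingTerm f) * g ≠ 0) :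
    m.toSyn (m.degree ((f - m.leadingTerm f) * g)) < m.toSyn (m.degree (f * g)) := by
  have hf := left_ne_zero_of_mul h
  refine (degree_mul_lt_iff_left_lt_of_ne_zero hf (right_ne_zero_of_mul h)).2
    (degree_sub_leadingTerm_lt_iff.2 fun h₀ => hf ?_)
  rw [eq_C_of_degree_eq_zero h₀, leadingTerm_C, sub_self]

theorem sPolynomial_eq_smul_monomial_mul_sub (f g : MvPolynomial σ R) :
    m.sPolynomial f g =
      m.leadingCoeff g • monomial (m.degree f ⊔ m.degree g - m.degree f) 1 * f -
        m.leadingCoeff f • monomial (m.degree f ⊔ m.degree g - m.degree g) 1 * g := by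
  simp only [sPolynomial_def, smul_monomial, smul_eq_mul, mul_one]

theorem sPolynomial_leadingTerm_mul_mem_repLT [NoZeroDivisors R] {a b u v : MvPolynomial σ R}
    {δ : m.syn} (hδ : 0 < δ)
    (hab : m.sPolynomial a b ∈ m.repLT G (m.toSyn (m.degree a ⊔ m.degree b)))
    (hu : u = 0 ∨ m.toSyn (m.degree (u * a)) = δ)
    (hv : v = 0 ∨ m.toSyn (m.degree (v * b)) = δ) :
    m.sPolynomial (m.leadingTerm u * a) (m.leadingTerm v * b) ∈ m.repLT G δ := by
  rw [sPolynomial_leadingTerm_mul']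
  rcases hu with rfl | hu
  · simp
  rcases hv with rfl | hv
  · simp
  have hne {w c : MvPolynomial σ R} (h : m.toSyn (m.degree (w * c)) = δ) :
      w ≠ 0 ∧ c ≠ 0 := by
    refine mul_ne_zero_iff.1 fun h₀ => hδ.ne ?_
    rw [← h, h₀, degree_zero, map_zero]
  have hdeg : m.degree (v * b) = m.degree (u * a) := m.toSyn.injective (hv.trans hu.symm)
  have hlcm : m.degree a ⊔ m.degree b ≤ m.degree (u * a) := by
    refine sup_le ?_ (hdeg ▸ ?_)
    · rw [degree_mul (hne hu).1 (hne hu).2]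
      exact le_add_self
    · rw [degree_mul (hne hv).1 (hne hv).2]
      exact le_add_self
  rw [hdeg, sup_idem]
  have := monomial_mul_mem_repLT hab (m.degree (u * a) - m.degree a ⊔ m.degree b)
    (m.leadingCoeff u * m.leadingCoeff v)
  rwa [← map_add, tsub_add_cancel_of_le hlcm, hu] at this

end Ring

section Field

variable {σ k : Type*} [Field k] {m : MonomialOrder σ} {G : Finset (MvPolynomial σ k)}

theorem mem_repLT_of_degree_lt
    (hS : ∀ g₁ ∈ G, ∀ g₂ ∈ G,
      m.sPolynomial g₁ g₂ ∈ m.repLT G (m.toSyn (m.degree g₁ ⊔ m.degree g₂)))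
    {p : MvPolynomial σ k} {δ : m.syn} (hp : p ∈ m.repLE G δ)
    (hlt : m.toSyn (m.degree p) < δ) :
    p ∈ m.repLT G δ := by
  classical
  have hδ : 0 < δ := (m.zero_le _).trans_lt hlt
  obtain ⟨q, rfl, hq⟩ := hp
  set top : MvPolynomial σ k → MvPolynomial σ k :=
    fun g => if m.toSyn (m.degree (q g * g)) = δ then q g else 0
  have htop : ∀ g ∈ G, top g = 0 ∨ m.toSyn (m.degree (top g * g)) = δ := by
    intro g _
    by_cases h : m.toSyn (m.degree (q g * g)) = δ <;> simp [top, h]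
  have hrest : ∑ g ∈ G, (q g - m.leadingTerm (top g)) * g ∈ m.repLT G δ := by
    refine ⟨_, rfl, fun g hg h => ?_⟩
    by_cases hδg : m.toSyn (m.degree (q g * g)) = δ
    · simp only [top, hδg, if_true] at h ⊢
      exact hδg ▸ degree_sub_leadingTerm_mul_lt h
    · simp only [top, hδg, if_false, leadingTerm_zero, sub_zero] at h ⊢
      exact (hq g hg).lt_of_ne hδg
  have hsplit : ∑ g ∈ G, q g * g = ∑ g ∈ G, m.leadingTerm (top g) * g +
      ∑ g ∈ G, (q g - m.leadingTerm (top g)) * g := by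
    rw [← Finset.sum_add_distrib]
    simp only [← add_mul, add_sub_cancel]
  have htop_lt : m.toSyn (m.degree (∑ g ∈ G, m.leadingTerm (top g) * g)) < δ := by
    rw [eq_sub_of_add_eq hsplit.symm]
    exact degree_sub_le.trans_lt (max_lt hlt (degree_lt_of_mem_repLT hδ hrest))
  have htop_deg : ∀ g ∈ G, m.toSyn (m.degree (m.leadingTerm (top g) * g)) = δ ∨
      m.leadingTerm (top g) * g = 0 := by
    intro g hg
    rcases htop g hg with h | h
    · simp [h]
    · rw [degree_leadingTerm_mul, h]
      exact Or.inl rfl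
  obtain ⟨c, hc⟩ :=
    sPolynomial_decomposition' (fun g => m.leadingTerm (top g) * g) htop_deg htop_lt
  rw [hsplit, hc]
  refine add_mem (Submodule.sum_mem _ fun a ha => Submodule.sum_mem _ fun b hb => ?_) hrest
  exact Submodule.smul_mem _ _
    (sPolynomial_leadingTerm_mul_mem_repLT hδ (hS a ha b hb) (htop a ha) (htop b hb))

theorem mem_repLE_degree_of_mem_span
    (hS : ∀ g₁ ∈ G, ∀ g₂ ∈ G,
      m.sPolynomial g₁ g₂ ∈ m.repLT G (m.toSyn (m.degree g₁ ⊔ m.degree g₂)))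
    {p : MvPolynomial σ k} (hp : p ∈ Ideal.span (G : Set (MvPolynomial σ k))) :
    p ∈ m.repLE G (m.toSyn (m.degree p)) := by
  obtain ⟨q, -, hq⟩ := Submodule.mem_span_finset.1 hp
  suffices ∀ δ, p ∈ m.repLE G δ → p ∈ m.repLE G (m.toSyn (m.degree p)) from
    this _ ⟨q, hq.symm, fun g hg =>
      Finset.le_sup (f := fun g => m.toSyn (m.degree (q g * g))) hg⟩
  intro δ
  induction δ using WellFoundedLT.induction with
  | ind δ ih =>
    intro hδ
    rcases lt_or_ge (m.toSyn (m.degree p)) δ with hlt | hle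
    · obtain ⟨δ', hδ', hp'⟩ := exists_lt_mem_repLE_of_mem_repLT ((m.zero_le _).trans_lt hlt)
        (mem_repLT_of_degree_lt hS hδ hlt)
      exact ih δ' hδ' hp'
    · exact repLE_mono hle hδ

end Field

end MonomialOrder

open MonomialOrder in
theorem buchberger_criterion_general {σ k : Type*} [Field k]
    (m : MonomialOrder σ) (G : Finset (MvPolynomial σ k))
    (hS : ∀ g₁ ∈ G, ∀ g₂ ∈ G,
      ∃ q : MvPolynomial σ k → MvPolynomial σ k,
        (m.leadCoeff g₂ • (monomial ((m.degree' g₁ ⊔ m.degree' g₂) - m.degree' g₁) 1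
            : MvPolynomial σ k) * g₁ -
          m.leadCoeff g₁ • (monomial ((m.degree' g₁ ⊔ m.degree' g₂) - m.degree' g₂) 1
            : MvPolynomial σ k) * g₂) = ∑ g ∈ G, q g * g ∧
        ∀ g ∈ G, q g * g ≠ 0 →
          m.toSyn (m.degree' (q g * g)) < m.toSyn (m.degree' g₁ ⊔ m.degree' g₂)) :
    Ideal.span {q : MvPolynomial σ k | ∃ g ∈ G, q = monomial (m.degree' g) (m.leadCoeff g)} =
      Ideal.span {q : MvPolynomial σ k |
        ∃ p ∈ Ideal.span (G : Set (MvPolynomial σ k)), p ≠ 0 ∧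
          q = monomial (m.degree' p) (m.leadCoeff p)} := by
  set I := Ideal.span (G : Set (MvPolynomial σ k))
  have hS' : ∀ g₁ ∈ G, ∀ g₂ ∈ G,
      m.sPolynomial g₁ g₂ ∈ m.repLT G (m.toSyn (m.degree g₁ ⊔ m.degree g₂)) := by
    intro g₁ h₁ g₂ h₂
    obtain ⟨q, hq, hlt⟩ := hS g₁ h₁ g₂ h₂
    exact ⟨q, (sPolynomial_eq_smul_monomial_mul_sub g₁ g₂).trans hq, hlt⟩
  have hG : {q | ∃ g ∈ G, q = monomial (m.degree' g) (m.leadCoeff g)} = m.leadingTerm '' G := by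
    ext
    simp [leadingTerm, eq_comm, degree'_eq_degree, leadCoeff_eq_leadingCoeff]
  have hI : {q | ∃ p ∈ I, p ≠ 0 ∧ q = monomial (m.degree' p) (m.leadCoeff p)} =
      m.leadingTerm '' (I \ {0}) := by
    ext
    simp [leadingTerm, eq_comm, degree'_eq_degree, leadCoeff_eq_leadingCoeff, and_assoc]
  rw [hG, hI, span_leadingTerm_sdiff_singleton_zero]
  refine le_antisymm (Ideal.span_mono (Set.image_mono Ideal.subset_span)) (Ideal.span_le.2 ?_)
  rintro _ ⟨p, hp, rfl⟩
  exact leadingTerm_mem_span_of_mem_repLE (mem_repLE_degree_of_mem_span hS' hp)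

/-- Buchberger's criterion over a field: if every S-polynomial of a pair of elements of G
has a representation whose summands all have head term strictly below the lcm of the head
terms, then G is a Gröbner basis of the ideal it generates. -/
theorem buchberger_criterion {σ k : Type*} [Field k] [Finite σ]
    (m : MonomialOrder σ) (G : Finset (MvPolynomial σ k)) (hG0 : ∀ g ∈ G, g ≠ 0)
    (hS : ∀ g₁ ∈ G, ∀ g₂ ∈ G,
      ∃ q : MvPolynomial σ k → MvPolynomial σ k,
        (m.leadCoeff g₂ • (monomial ((m.degree' g₁ ⊔ m.degree' g₂) - m.degree' g₁) 1
            : MvPolynomial σ k) * g₁ -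
          m.leadCoeff g₁ • (monomial ((m.degree' g₁ ⊔ m.degree' g₂) - m.degree' g₂) 1
            : MvPolynomial σ k) * g₂) = ∑ g ∈ G, q g * g ∧
        ∀ g ∈ G, q g * g ≠ 0 →
          m.toSyn (m.degree' (q g * g)) < m.toSyn (m.degree' g₁ ⊔ m.degree' g₂)) :
    Ideal.span {q : MvPolynomial σ k | ∃ g ∈ G, q = monomial (m.degree' g) (m.leadCoeff g)} =
      Ideal.span {q : MvPolynomial σ k |
        ∃ p ∈ Ideal.span (G : Set (MvPolynomial σ k)), p ≠ 0 ∧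
          q = monomial (m.degree' p) (m.leadCoeff p)} :=
  buchberger_criterion_general m G hS
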